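/- arXiv:0901.1322 — 2 statements merged into one kernel-verified Lean document; each statement's English description precedes it below -/
import Mathlib

section
/- Let e₁ⁿ and e₂ⁿ be sequences of oriented segments in ℝ² converging (endpoint-wise) to segments e₁ and e₂ respectively, such that for every n the segments e₁ⁿ and e₂ⁿ do not intersect at a point lying in the relative interior of both. If e₁ and e₂ do not overlap over a segment of positive length, then Ord(e₁ⁿ, e₂ⁿ) converges to Ord(e₁, e₂); if e₁ and e₂ overlap over a segment of length d > 0, then every accumulation point of the real sequence Ord(e₁ⁿ, e₂ⁿ) lies in {d, −d}. -/
open MeasureTheory Filter Topology Set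

noncomputable section
open scoped Classical

abbrev Pt : Type := EuclideanSpace ℝ (Fin 2)

/-- The point with coordinates `(a, b)` in the plane. -/
def pt (a b : ℝ) : Pt := WithLp.toLp 2 ![a, b]

/-- `d₊(e₁,e₂)` where `e₁` is the oriented segment from `p` to `q` and `e₂` the segment
from `r` to `s`: the Lebesgue measure of the set of `x ∈ [0, ‖q-p‖]` such that some point
of `e₂` has coordinates `(x, y)` with `y ≥ 0` in the frame centered at `p` with the
`x`-axis directed along `e₁`. It is `0` if `e₁` is degenerate. -/
def dplus (p q r s : Pt) : ℝ :=
  if p = q then 0 else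
    (volume {x : ℝ | x ∈ Set.Icc (0 : ℝ) (dist p q) ∧
        ∃ y : ℝ, 0 ≤ y ∧
          p + x • (‖q - p‖⁻¹ • (q - p)) +
              y • pt (-(‖q - p‖⁻¹ • (q - p)) 1) ((‖q - p‖⁻¹ • (q - p)) 0)
            ∈ segment ℝ r s}).toReal

/-- As `dplus`, but for points below the axis (`y ≤ 0`). -/
def dminus (p q r s : Pt) : ℝ :=
  if p = q then 0 else
    (volume {x : ℝ | x ∈ Set.Icc (0 : ℝ) (dist p q) ∧
        ∃ y : ℝ, y ≤ 0 ∧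
          p + x • (‖q - p‖⁻¹ • (q - p)) +
              y • pt (-(‖q - p‖⁻¹ • (q - p)) 1) ((‖q - p‖⁻¹ • (q - p)) 0)
            ∈ segment ℝ r s}).toReal

/-- The order function `Ord(e₁,e₂) = d₊(e₁,e₂) − d₋(e₁,e₂)`. -/
def ordFn (p q r s : Pt) : ℝ := dplus p q r s - dminus p q r s

/-- Two subsets of the plane overlap over a segment of length `d` if their intersection is
a segment of length `d`. -/
def OverlapLen (s t : Set Pt) (d : ℝ) : Prop :=
  ∃ u v : Pt, s ∩ t = segment ℝ u v ∧ dist u v = d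


/-!
In the frame of `e₁` (origin `p`, first axis along `q - p`, `l = ‖q - p‖`) let `e₂` run from
`(a, α)` to `(b, β)`. Then `d₊(e₁, e₂)` is the length of `[0, l] ∩ [c, c']`, where `[c, c']` is the
projection of the part of `e₂` above the axis, and `d₋` is the same with `α, β` negated. The
endpoints `c, c'` depend continuously on `(a, b, α, β)` except where `α = β = 0`, i.e. where `e₂`
lies on the line of `e₁`; there `d₊` is squeezed by the length of `[0, l] ∩ [a, b]`, which
vanishes unless `e₁` and `e₂` overlap. This gives the convergence.

If `e₂ⁿ` meets `e₁ⁿ` in no point interior to both, then `e₂ⁿ` crosses the axis outside `(0, l)`,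
so the projection of its upper or of its lower part meets `[0, l]` in a null set, and
`|Ord(e₁ⁿ, e₂ⁿ)|` is the length of `[0, l] ∩ [a, b]`. This tends to the length `d` of the overlap
of `e₁` and `e₂`.
-/

def interLen (l c d : ℝ) : ℝ := max 0 (min l (max c d) - max 0 (min c d))

section interLen

variable {l a b c d : ℝ}

lemma interLen_nonneg (l c d : ℝ) : 0 ≤ interLen l c d := le_max_left _ _

lemma interLen_comm (l c d : ℝ) : interLen l c d = interLen l d c := by
  simp only [interLen, max_comm c d, min_comm c d]

lemma interLen_of_le (h : c ≤ d) : interLen l c d = max 0 (min l d - max 0 c) := by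
  rw [interLen, max_eq_right h, min_eq_left h]

lemma interLen_self (l c : ℝ) : interLen l c c = 0 := by
  rw [interLen_of_le le_rfl]
  exact max_eq_left (by linarith [min_le_right l c, le_max_right 0 c])

lemma interLen_le (hl : 0 ≤ l) : interLen l c d ≤ l :=
  max_le hl (by linarith [min_le_left l (max c d), le_max_left 0 (min c d)])

lemma toReal_volume_Icc_inter_uIcc (l c d : ℝ) :
    (volume (Icc 0 l ∩ uIcc c d)).toReal = interLen l c d := by
  rw [uIcc, Icc_inter_Icc, Real.volume_Icc, ENNReal.toReal_ofReal']
  simp only [interLen, max_comm]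

lemma interLen_mono (h : uIcc c d ⊆ uIcc a b) : interLen l c d ≤ interLen l a b := by
  rw [← toReal_volume_Icc_inter_uIcc, ← toReal_volume_Icc_inter_uIcc]
  refine ENNReal.toReal_mono ?_ (measure_mono (inter_subset_inter_right _ h))
  exact measure_ne_top_of_subset inter_subset_left (by simp)

lemma diam_Icc_inter_uIcc (l c d : ℝ) : Metric.diam (Icc 0 l ∩ uIcc c d) = interLen l c d := by
  rw [uIcc, Icc_inter_Icc, interLen]
  set c₁ := max 0 (min c d)
  set c₂ := min l (max c d)
  rcases le_or_gt c₁ c₂ with h | h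
  · rw [Real.diam_Icc h, max_eq_right (by linarith)]
  · rw [Icc_eq_empty_of_lt h, Metric.diam_empty, max_eq_left (by linarith)]

lemma tendsto_interLen {ι : Type*} {F : Filter ι} {ln cn dn : ι → ℝ}
    (hl : Tendsto ln F (𝓝 l)) (hc : Tendsto cn F (𝓝 c)) (hd : Tendsto dn F (𝓝 d)) :
    Tendsto (fun i => interLen (ln i) (cn i) (dn i)) F (𝓝 (interLen l c d)) :=
  tendsto_const_nhds.max ((hl.min (hc.max hd)).sub (tendsto_const_nhds.max (hc.min hd)))

lemma add_mul_sub_mem_uIcc {t : ℝ} (ht : t ∈ Icc (0 : ℝ) 1) : a + t * (b - a) ∈ uIcc a b := by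
  rw [← segment_eq_uIcc, segment_eq_image']
  exact ⟨t, ht, rfl⟩

lemma exists_add_mul_sub_mem_Ioo_of_interLen_pos (h : 0 < interLen l a b) :
    ∃ t ∈ Ioo (0 : ℝ) 1, a + t * (b - a) ∈ Ioo 0 l := by
  rw [interLen, lt_max_iff] at h
  simp only [lt_self_iff_false, sub_pos, false_or] at h
  have hab : a ≠ b := by
    rintro rfl
    linarith [min_le_right l (max a a), le_max_right 0 (min a a), max_self a, min_self a]
  have hmid : (max 0 (min a b) + min l (max a b)) / 2 ∈ openSegment ℝ a b := by
    rw [openSegment_eq_Ioo' hab]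
    constructor <;> linarith [le_max_right 0 (min a b), min_le_right l (max a b)]
  rw [openSegment_eq_image'] at hmid
  obtain ⟨t, ht, hx⟩ := hmid
  refine ⟨t, ht, ?_⟩
  rw [← smul_eq_mul, show a + t • (b - a) = _ from hx]
  constructor <;> linarith [le_max_left 0 (min a b), min_le_left l (max a b)]

lemma abs_interLen_sub_of_le (hl : 0 ≤ l) (hac : a ≤ c) (hcb : c ≤ b) (hc : c ≤ 0 ∨ l ≤ c) :
    |interLen l a c - interLen l c b| = interLen l a b := by
  rw [interLen_of_le hac, interLen_of_le hcb, interLen_of_le (hac.trans hcb)]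
  rcases hc with h | h
  · rw [max_eq_left h, max_eq_left (hac.trans h), min_eq_right (h.trans hl),
      max_eq_left (by linarith : c - 0 ≤ 0), zero_sub, abs_neg, sub_zero,
      abs_of_nonneg (le_max_left _ _)]
  · rw [min_eq_left h, min_eq_left (h.trans hcb), max_eq_left (a := (0 : ℝ)) (by
      linarith [le_max_right 0 c] : l - max 0 c ≤ 0), sub_zero, abs_of_nonneg (le_max_left _ _)]

lemma abs_interLen_sub (hl : 0 ≤ l) (hc : c ∈ uIcc a b) (hc' : c ≤ 0 ∨ l ≤ c) :
    |interLen l a c - interLen l c b| = interLen l a b := by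
  rcases mem_uIcc.mp hc with ⟨h₁, h₂⟩ | ⟨h₁, h₂⟩
  · exact abs_interLen_sub_of_le hl h₁ h₂ hc'
  · rw [abs_sub_comm, interLen_comm l c b, interLen_comm l a c, interLen_comm l a b]
    exact abs_interLen_sub_of_le hl h₁ h₂ hc'

end interLen

def cutFrac (α β : ℝ) : ℝ := max (-α) 0 / (max (-α) 0 + |β|)

def upperShadow (a b α β : ℝ) : Set ℝ :=
  {x | ∃ t ∈ Icc (0 : ℝ) 1, 0 ≤ α + t * (β - α) ∧ x = a + t * (b - a)}

-- The length of `Icc 0 l ∩ upperShadow a b α β`: the segment from `(a, α)` to `(b, β)` is cut at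
-- the parameters `cutFrac α β` and `1 - cutFrac β α`, which coincide when `α, β < 0`.
def upperShadowLen (l a b α β : ℝ) : ℝ :=
  interLen l (a + cutFrac α β * (b - a)) (b + cutFrac β α * (a - b))

section upperShadow

variable {l a b α β : ℝ}

lemma cutFrac_of_nonneg (hα : 0 ≤ α) (β : ℝ) : cutFrac α β = 0 := by
  rw [cutFrac, max_eq_right (by linarith), zero_div]

lemma cutFrac_of_neg_of_nonneg (hα : α < 0) (hβ : 0 ≤ β) : cutFrac α β = α / (α - β) := by
  rw [cutFrac, max_eq_left (by linarith), abs_of_nonneg hβ, ← neg_div_neg_eq, neg_neg]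
  ring

lemma cutFrac_add_cutFrac (hα : α ≤ 0) (hβ : β ≤ 0) (h : α ≠ 0 ∨ β ≠ 0) :
    cutFrac α β + cutFrac β α = 1 := by
  have hden : -α + -β ≠ 0 := by rcases h with h | h <;> contrapose! h <;> linarith
  rw [cutFrac, cutFrac, max_eq_left (by linarith), max_eq_left (by linarith), abs_of_nonpos hα,
    abs_of_nonpos hβ, add_comm (-β), ← add_div, div_self hden]

lemma cutFrac_mem_Icc (α β : ℝ) : cutFrac α β ∈ Icc (0 : ℝ) 1 :=
  ⟨by unfold cutFrac; positivity,
    div_le_one_of_le₀ (le_add_of_nonneg_right (abs_nonneg β)) (by positivity)⟩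

lemma continuousAt_cutFrac (h : (α, β) ≠ 0) :
    ContinuousAt (fun v : ℝ × ℝ => cutFrac v.1 v.2) (α, β) := by
  rcases lt_or_ge 0 α with hα | hα
  · refine (continuousAt_const (y := (0 : ℝ))).congr ?_
    filter_upwards [continuousAt_const.eventually_lt continuousAt_fst hα] with v hv
    exact (cutFrac_of_nonneg hv.le v.2).symm
  · have hden : max (-α) 0 + |β| ≠ 0 := by
      contrapose! h
      have hβ : |β| = 0 := by linarith [le_max_right (-α) 0, abs_nonneg β]
      rw [Prod.mk_eq_zero]
      exact ⟨by linarith [le_max_left (-α) 0, abs_nonneg β], abs_eq_zero.mp hβ⟩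
    exact ContinuousAt.div (by fun_prop) (by fun_prop) hden

lemma upperShadow_comm (a b α β : ℝ) : upperShadow a b α β = upperShadow b a β α := by
  suffices ∀ a b α β : ℝ, upperShadow a b α β ⊆ upperShadow b a β α from
    (this a b α β).antisymm (this b a β α)
  rintro a b α β x ⟨t, ⟨ht₀, ht₁⟩, hy, rfl⟩
  exact ⟨1 - t, ⟨by linarith, by linarith⟩, by linarith, by ring⟩

lemma upperShadowLen_comm (l a b α β : ℝ) :
    upperShadowLen l a b α β = upperShadowLen l b a β α := interLen_comm _ _ _

lemma upperShadowLen_of_nonneg (hα : 0 ≤ α) (hβ : 0 ≤ β) :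
    upperShadowLen l a b α β = interLen l a b := by
  simp only [upperShadowLen, cutFrac_of_nonneg hα, cutFrac_of_nonneg hβ, zero_mul, add_zero]

lemma upperShadowLen_of_nonpos (hα : α ≤ 0) (hβ : β ≤ 0) (h : α ≠ 0 ∨ β ≠ 0) :
    upperShadowLen l a b α β = 0 := by
  rw [upperShadowLen, ← interLen_self l (a + cutFrac α β * (b - a))]
  congr 1
  linear_combination (a - b) * cutFrac_add_cutFrac hα hβ h

lemma upperShadowLen_le (l a b α β : ℝ) : upperShadowLen l a b α β ≤ interLen l a b := by
  refine interLen_mono (uIcc_subset_uIcc (add_mul_sub_mem_uIcc (cutFrac_mem_Icc α β)) ?_)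
  rw [uIcc_comm]
  exact add_mul_sub_mem_uIcc (cutFrac_mem_Icc β α)

lemma upperShadow_eq_image (hαβ : α ≤ β) (hβ : 0 ≤ β) :
    upperShadow a b α β = AffineMap.lineMap a b '' Icc (cutFrac α β) 1 := by
  ext x
  simp only [upperShadow, mem_image, AffineMap.lineMap_apply_ring', mem_Icc]
  refine exists_congr fun t => ?_
  rw [show t * (b - a) + a = a + t * (b - a) by ring, eq_comm (a := x)]
  rcases le_or_gt 0 α with hα | hα
  · rw [cutFrac_of_nonneg hα]
    exact ⟨fun h => ⟨h.1, h.2.2⟩, fun h => ⟨h.1, by nlinarith [h.1.1, h.1.2], h.2⟩⟩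
  · rw [cutFrac_of_neg_of_nonneg hα hβ, div_le_iff_of_neg (by linarith)]
    constructor
    · rintro ⟨⟨-, ht⟩, hy, rfl⟩; exact ⟨⟨by linarith, ht⟩, rfl⟩
    · rintro ⟨⟨hy, ht⟩, rfl⟩
      have : 0 ≤ t := by nlinarith
      exact ⟨⟨this, ht⟩, by linarith, rfl⟩

lemma toReal_volume_Icc_inter_upperShadow (l a b α β : ℝ) :
    (volume (Icc 0 l ∩ upperShadow a b α β)).toReal = upperShadowLen l a b α β := by
  wlog hαβ : α ≤ β generalizing a b α β
  · rw [upperShadow_comm, upperShadowLen_comm]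
    exact this b a β α (by linarith)
  rcases lt_or_ge β 0 with hβ | hβ
  · have hempty : upperShadow a b α β = ∅ := by
      refine eq_empty_of_forall_notMem ?_
      rintro x ⟨t, ⟨ht₀, ht₁⟩, hy, -⟩
      nlinarith
    rw [hempty, inter_empty, measure_empty, ENNReal.toReal_zero,
      upperShadowLen_of_nonpos (hαβ.trans hβ.le) hβ.le (Or.inr hβ.ne)]
  · rw [upperShadow_eq_image hαβ hβ, ← segment_eq_Icc (cutFrac_mem_Icc α β).2, image_segment,
      segment_eq_uIcc, toReal_volume_Icc_inter_uIcc, upperShadowLen,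
      cutFrac_of_nonneg hβ α, AffineMap.lineMap_apply_ring', AffineMap.lineMap_apply_ring']
    congr 1 <;> ring

lemma tendsto_upperShadowLen {ι : Type*} {F : Filter ι} {ln an bn αn βn : ι → ℝ}
    (hl : Tendsto ln F (𝓝 l)) (ha : Tendsto an F (𝓝 a)) (hb : Tendsto bn F (𝓝 b))
    (hα : Tendsto αn F (𝓝 α)) (hβ : Tendsto βn F (𝓝 β)) (h : (α, β) ≠ 0 ∨ interLen l a b = 0) :
    Tendsto (fun i => upperShadowLen (ln i) (an i) (bn i) (αn i) (βn i)) F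
      (𝓝 (upperShadowLen l a b α β)) := by
  rcases h with h | h
  · have h' : (β, α) ≠ 0 := by
      contrapose! h
      simp_all [Prod.ext_iff]
    exact tendsto_interLen hl
      (ha.add (((continuousAt_cutFrac h).tendsto.comp (hα.prodMk_nhds hβ)).mul (hb.sub ha)))
      (hb.add (((continuousAt_cutFrac h').tendsto.comp (hβ.prodMk_nhds hα)).mul (ha.sub hb)))
  · rw [le_antisymm ((upperShadowLen_le l a b α β).trans h.le) (interLen_nonneg _ _ _)]
    exact tendsto_of_tendsto_of_tendsto_of_le_of_le tendsto_const_nhds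
      (h ▸ tendsto_interLen hl ha hb) (fun i => interLen_nonneg _ _ _)
      (fun i => upperShadowLen_le _ _ _ _ _)

lemma upperShadowLen_of_pos_of_neg (hα : 0 < α) (hβ : β < 0) :
    upperShadowLen l a b α β = interLen l a (a + α / (α - β) * (b - a)) ∧
      upperShadowLen l a b (-α) (-β) = interLen l (a + α / (α - β) * (b - a)) b := by
  have hαβ : α - β ≠ 0 := by intro h; linarith
  have hβα : β - α ≠ 0 := by intro h; linarith
  constructor
  · rw [upperShadowLen, cutFrac_of_nonneg hα.le, cutFrac_of_neg_of_nonneg hβ hα.le]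
    congr 1
    · ring
    · field_simp; ring
  · rw [upperShadowLen, cutFrac_of_nonneg (by linarith : 0 ≤ -β),
      cutFrac_of_neg_of_nonneg (by linarith) (by linarith)]
    congr 1
    · rw [show -α - -β = -(α - β) by ring, neg_div_neg_eq]
    · ring

lemma abs_upperShadowLen_sub_neg (hl : 0 ≤ l)
    (hcross : ∀ t ∈ Ioo (0 : ℝ) 1, α + t * (β - α) = 0 → a + t * (b - a) ∉ Ioo 0 l) :
    |upperShadowLen l a b α β - upperShadowLen l a b (-α) (-β)| = interLen l a b := by
  wlog hα : 0 ≤ α generalizing α β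
  · rw [abs_sub_comm, ← neg_neg α, ← neg_neg β, neg_neg, neg_neg]
    exact this (fun t ht h => hcross t ht (by linear_combination -h)) (by linarith)
  rcases le_or_gt 0 β with hβ | hβ
  · rw [upperShadowLen_of_nonneg hα hβ]
    by_cases h0 : α = 0 ∧ β = 0
    · obtain ⟨rfl, rfl⟩ := h0
      have hzero : interLen l a b = 0 := by
        by_contra hne
        obtain ⟨t, ht, hx⟩ :=
          exists_add_mul_sub_mem_Ioo_of_interLen_pos ((interLen_nonneg l a b).lt_of_ne' hne)
        exact hcross t ht (by ring) hx
      rw [neg_zero, upperShadowLen_of_nonneg le_rfl le_rfl, sub_self, abs_zero, hzero]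
    · rw [upperShadowLen_of_nonpos (neg_nonpos.2 hα) (neg_nonpos.2 hβ)
        (by simpa only [neg_ne_zero, ← not_and_or] using h0), sub_zero,
        abs_of_nonneg (interLen_nonneg _ _ _)]
  rcases hα.eq_or_lt with rfl | hα
  · rw [upperShadowLen_of_nonpos le_rfl hβ.le (Or.inr hβ.ne), neg_zero,
      upperShadowLen_of_nonneg le_rfl (by linarith), zero_sub, abs_neg,
      abs_of_nonneg (interLen_nonneg _ _ _)]
  set t := α / (α - β) with ht_eq
  have ht : t ∈ Ioo (0 : ℝ) 1 :=
    ⟨div_pos hα (by linarith), (div_lt_one (by linarith)).2 (by linarith)⟩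
  have hcut : α + t * (β - α) = 0 := by
    rw [ht_eq]; field_simp [(sub_pos.2 (hβ.trans hα)).ne']; ring
  obtain ⟨h₁, h₂⟩ := upperShadowLen_of_pos_of_neg (l := l) (a := a) (b := b) hα hβ
  rw [h₁, h₂]
  refine abs_interLen_sub hl (add_mul_sub_mem_uIcc (Ioo_subset_Icc_self ht)) ?_
  simpa only [mem_Ioo, not_and_or, not_lt] using hcross t ht hcut

end upperShadow

section unitLine

variable {E : Type*} [NormedAddCommGroup E] [NormedSpace ℝ E]

def unitLine (x : E) {u : E} (hu : ‖u‖ = 1) : ℝ →ᵃⁱ[ℝ] E :=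
  (AffineIsometryEquiv.constVAdd ℝ E x).toAffineIsometry.comp
    (LinearIsometry.toSpanSingleton ℝ E hu).toAffineIsometry

@[simp]
lemma unitLine_apply (x : E) {u : E} (hu : ‖u‖ = 1) (t : ℝ) : unitLine x hu t = x + t • u := by
  simp [unitLine]

lemma image_unitLine_uIcc (x : E) {u : E} (hu : ‖u‖ = 1) (c d : ℝ) :
    unitLine x hu '' uIcc c d = segment ℝ (x + c • u) (x + d • u) := by
  rw [← segment_eq_uIcc, ← unitLine_apply x hu, ← unitLine_apply x hu]
  exact image_segment ℝ (unitLine x hu).toAffineMap c d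

lemma image_unitLine_Ioo (x : E) {u : E} (hu : ‖u‖ = 1) {c d : ℝ} (h : c < d) :
    unitLine x hu '' Ioo c d = openSegment ℝ (x + c • u) (x + d • u) := by
  rw [← openSegment_eq_Ioo h, ← unitLine_apply x hu, ← unitLine_apply x hu]
  exact image_openSegment ℝ (unitLine x hu).toAffineMap c d

lemma openSegment_subset_intrinsicInterior_segment (x y : E) :
    openSegment ℝ x y ⊆ intrinsicInterior ℝ (segment ℝ x y) := by
  rcases eq_or_ne x y with rfl | hxy
  · simp [intrinsicInterior_singleton]
  have hL : 0 < ‖y - x‖ := norm_pos_iff.2 (sub_ne_zero.2 hxy.symm)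
  have hu : ‖‖y - x‖⁻¹ • (y - x)‖ = 1 := norm_smul_inv_norm (sub_ne_zero.2 hxy.symm)
  have hy : x + ‖y - x‖ • (‖y - x‖⁻¹ • (y - x)) = y := by
    rw [smul_inv_smul₀ hL.ne', add_sub_cancel]
  have hseg := image_unitLine_uIcc x hu 0 ‖y - x‖
  have hopen := image_unitLine_Ioo x hu hL
  rw [zero_smul, add_zero, hy] at hseg hopen
  rw [← hopen, ← hseg, uIcc_of_le hL.le, AffineIsometry.intrinsicInterior_image, ← interior_Icc]
  exact image_mono interior_subset_intrinsicInterior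

lemma diam_segment (x y : E) :
    Metric.diam (segment ℝ x y) = dist x y := by
  rw [← convexHull_pair, convexHull_diam, Metric.diam_pair]

end unitLine

def udir (p q : Pt) : Pt := ‖q - p‖⁻¹ • (q - p)

-- The point with coordinates `(x, y)` in the frame of `dplus` and `dminus`.
def frame (p q : Pt) (x y : ℝ) : Pt := p + x • udir p q + y • pt (-(udir p q 1)) (udir p q 0)

def frameX (p q z : Pt) : ℝ := (z 0 - p 0) * udir p q 0 + (z 1 - p 1) * udir p q 1

def frameY (p q z : Pt) : ℝ := (z 1 - p 1) * udir p q 0 - (z 0 - p 0) * udir p q 1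

section frame

variable {p q r s z : Pt} {x y : ℝ}

lemma norm_udir (h : p ≠ q) : ‖udir p q‖ = 1 :=
  norm_smul_inv_norm (sub_ne_zero.2 h.symm)

lemma udir_sq_add_sq (h : p ≠ q) : udir p q 0 ^ 2 + udir p q 1 ^ 2 = 1 := by
  have := norm_udir h
  rw [EuclideanSpace.norm_eq, Real.sqrt_eq_one, Fin.sum_univ_two] at this
  simpa only [Real.norm_eq_abs, sq_abs] using this

lemma sub_eq_dist_smul_udir (h : p ≠ q) : q - p = dist p q • udir p q := by
  rw [udir, smul_smul, dist_eq_norm', mul_inv_cancel₀ (norm_ne_zero_iff.2 (sub_ne_zero.2 h.symm)),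
    one_smul]

lemma frame_eq_iff (h : p ≠ q) : frame p q x y = z ↔ x = frameX p q z ∧ y = frameY p q z := by
  have hu := udir_sq_add_sq h
  have h0 : frame p q x y 0 = p 0 + x * udir p q 0 - y * udir p q 1 := by
    simp [frame, pt]; ring
  have h1 : frame p q x y 1 = p 1 + x * udir p q 1 + y * udir p q 0 := by
    simp [frame, pt]
  constructor
  · rintro rfl
    constructor
    · simp only [frameX, h0, h1]; linear_combination -x * hu
    · simp only [frameY, h0, h1]; linear_combination -y * hu
  · rintro ⟨rfl, rfl⟩
    have e0 : frame p q (frameX p q z) (frameY p q z) 0 = z 0 := by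
      rw [h0]; simp only [frameX, frameY]; linear_combination (z 0 - p 0) * hu
    have e1 : frame p q (frameX p q z) (frameY p q z) 1 = z 1 := by
      rw [h1]; simp only [frameX, frameY]; linear_combination (z 1 - p 1) * hu
    ext i
    fin_cases i
    exacts [e0, e1]

lemma frameX_add_smul_sub (p q z w : Pt) (t : ℝ) :
    frameX p q (z + t • (w - z)) = frameX p q z + t * (frameX p q w - frameX p q z) := by
  simp [frameX]; ring

lemma frameY_add_smul_sub (p q z w : Pt) (t : ℝ) :
    frameY p q (z + t • (w - z)) = frameY p q z + t * (frameY p q w - frameY p q z) := by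
  simp [frameY]; ring

lemma frameY_self_left (p q : Pt) : frameY p q p = 0 := by simp [frameY]

lemma frameY_self_right (p q : Pt) : frameY p q q = 0 := by simp [frameY, udir]; ring

lemma frame_mem_segment_iff (h : p ≠ q) :
    frame p q x y ∈ segment ℝ r s ↔ ∃ t ∈ Icc (0 : ℝ) 1,
      x = frameX p q r + t * (frameX p q s - frameX p q r) ∧
      y = frameY p q r + t * (frameY p q s - frameY p q r) := by
  rw [segment_eq_image']
  refine exists_congr fun t => and_congr_right fun _ => ?_
  rw [eq_comm, frame_eq_iff h, frameX_add_smul_sub, frameY_add_smul_sub]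

lemma dplus_eq (h : p ≠ q) : dplus p q r s = upperShadowLen (dist p q)
    (frameX p q r) (frameX p q s) (frameY p q r) (frameY p q s) := by
  rw [dplus, if_neg h, ← toReal_volume_Icc_inter_upperShadow]
  congr 2
  ext x
  refine and_congr_right fun _ => ?_
  show (∃ y, 0 ≤ y ∧ frame p q x y ∈ segment ℝ r s) ↔ x ∈ upperShadow _ _ _ _
  simp only [frame_mem_segment_iff h, upperShadow]
  constructor
  · rintro ⟨y, hy, t, ht, hx, rfl⟩
    exact ⟨t, ht, hy, hx⟩
  · rintro ⟨t, ht, hy, hx⟩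
    exact ⟨_, hy, t, ht, hx, rfl⟩

lemma dminus_eq (h : p ≠ q) : dminus p q r s = upperShadowLen (dist p q)
    (frameX p q r) (frameX p q s) (-frameY p q r) (-frameY p q s) := by
  rw [dminus, if_neg h, ← toReal_volume_Icc_inter_upperShadow]
  congr 2
  ext x
  refine and_congr_right fun _ => ?_
  show (∃ y, y ≤ 0 ∧ frame p q x y ∈ segment ℝ r s) ↔ x ∈ upperShadow _ _ _ _
  simp only [frame_mem_segment_iff h, upperShadow]
  constructor
  · rintro ⟨y, hy, t, ht, hx, rfl⟩
    exact ⟨t, ht, by linear_combination hy, hx⟩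
  · rintro ⟨t, ht, hy, hx⟩
    exact ⟨_, by linear_combination hy, t, ht, hx, rfl⟩

lemma ordFn_eq (h : p ≠ q) : ordFn p q r s =
    upperShadowLen (dist p q) (frameX p q r) (frameX p q s) (frameY p q r) (frameY p q s) -
      upperShadowLen (dist p q) (frameX p q r) (frameX p q s) (-frameY p q r) (-frameY p q s) := by
  rw [ordFn, dplus_eq h, dminus_eq h]

lemma ordFn_self (p r s : Pt) : ordFn p p r s = 0 := by
  simp [ordFn, dplus, dminus]

lemma frame_zero (h : p ≠ q) (x : ℝ) : frame p q x 0 = unitLine p (norm_udir h) x := by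
  simp [frame]

lemma segment_eq_image_unitLine (h : p ≠ q) :
    segment ℝ p q = unitLine p (norm_udir h) '' Icc 0 (dist p q) := by
  rw [← uIcc_of_le dist_nonneg, image_unitLine_uIcc, zero_smul, add_zero,
    ← sub_eq_dist_smul_udir h, add_sub_cancel]

lemma openSegment_eq_image_unitLine (h : p ≠ q) :
    openSegment ℝ p q = unitLine p (norm_udir h) '' Ioo 0 (dist p q) := by
  rw [image_unitLine_Ioo _ _ (dist_pos.2 h), zero_smul, add_zero,
    ← sub_eq_dist_smul_udir h, add_sub_cancel]

end frame

section limits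

variable {ι : Type*} {F : Filter ι} {pn qn zn : ι → Pt} {p q z : Pt}

lemma tendsto_udir (h : p ≠ q) (hp : Tendsto pn F (𝓝 p)) (hq : Tendsto qn F (𝓝 q)) :
    Tendsto (fun i => udir (pn i) (qn i)) F (𝓝 (udir p q)) :=
  ((hq.sub hp).norm.inv₀ (norm_ne_zero_iff.2 (sub_ne_zero.2 h.symm))).smul (hq.sub hp)

lemma tendsto_apply_fin_two (hz : Tendsto zn F (𝓝 z)) (k : Fin 2) :
    Tendsto (fun i => zn i k) F (𝓝 (z k)) :=
  ((EuclideanSpace.proj k).continuous.tendsto z).comp hz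

lemma tendsto_frameX (h : p ≠ q) (hp : Tendsto pn F (𝓝 p)) (hq : Tendsto qn F (𝓝 q))
    (hz : Tendsto zn F (𝓝 z)) :
    Tendsto (fun i => frameX (pn i) (qn i) (zn i)) F (𝓝 (frameX p q z)) := by
  have hu := tendsto_apply_fin_two (tendsto_udir h hp hq)
  have hp := tendsto_apply_fin_two hp
  have hz := tendsto_apply_fin_two hz
  exact (((hz 0).sub (hp 0)).mul (hu 0)).add (((hz 1).sub (hp 1)).mul (hu 1))

lemma tendsto_frameY (h : p ≠ q) (hp : Tendsto pn F (𝓝 p)) (hq : Tendsto qn F (𝓝 q))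
    (hz : Tendsto zn F (𝓝 z)) :
    Tendsto (fun i => frameY (pn i) (qn i) (zn i)) F (𝓝 (frameY p q z)) := by
  have hu := tendsto_apply_fin_two (tendsto_udir h hp hq)
  have hp := tendsto_apply_fin_two hp
  have hz := tendsto_apply_fin_two hz
  exact (((hz 1).sub (hp 1)).mul (hu 0)).sub (((hz 0).sub (hp 0)).mul (hu 1))

lemma tendsto_ordFn {rn sn : ι → Pt} {r s : Pt} (h : p ≠ q) (hp : Tendsto pn F (𝓝 p))
    (hq : Tendsto qn F (𝓝 q)) (hr : Tendsto rn F (𝓝 r)) (hs : Tendsto sn F (𝓝 s))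
    (hcoll : (frameY p q r, frameY p q s) ≠ 0 ∨
      interLen (dist p q) (frameX p q r) (frameX p q s) = 0) :
    Tendsto (fun i => ordFn (pn i) (qn i) (rn i) (sn i)) F (𝓝 (ordFn p q r s)) := by
  have hl := hp.dist hq
  have hne : ∀ᶠ i in F, pn i ≠ qn i :=
    (hl.eventually_const_lt (dist_pos.2 h)).mono fun i hi => dist_pos.1 hi
  have hcoll' : (-frameY p q r, -frameY p q s) ≠ 0 ∨
      interLen (dist p q) (frameX p q r) (frameX p q s) = 0 := by
    simpa [Prod.ext_iff] using hcoll
  have hα := tendsto_frameY h hp hq hr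
  have hβ := tendsto_frameY h hp hq hs
  have ha := tendsto_frameX h hp hq hr
  have hb := tendsto_frameX h hp hq hs
  rw [ordFn_eq h]
  refine ((tendsto_upperShadowLen hl ha hb hα hβ hcoll).sub
    (tendsto_upperShadowLen hl ha hb hα.neg hβ.neg hcoll')).congr' ?_
  filter_upwards [hne] with i hi
  rw [ordFn_eq hi]

end limits

section geometry

variable {p q r s : Pt}

lemma frameX_notMem_Ioo_of_frameY_eq_zero (h : p ≠ q)
    (hnt : ∀ z : Pt, ¬ (z ∈ intrinsicInterior ℝ (segment ℝ p q) ∧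
      z ∈ intrinsicInterior ℝ (segment ℝ r s)))
    {t : ℝ} (ht : t ∈ Ioo (0 : ℝ) 1)
    (hy : frameY p q r + t * (frameY p q s - frameY p q r) = 0) :
    frameX p q r + t * (frameX p q s - frameX p q r) ∉ Ioo 0 (dist p q) := by
  intro hx
  have hz : frame p q (frameX p q r + t * (frameX p q s - frameX p q r)) 0 = r + t • (s - r) := by
    rw [frame_eq_iff h, frameX_add_smul_sub, frameY_add_smul_sub, hy]
    exact ⟨rfl, rfl⟩
  refine hnt (r + t • (s - r)) ⟨openSegment_subset_intrinsicInterior_segment p q ?_,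
    openSegment_subset_intrinsicInterior_segment r s ?_⟩
  · rw [← hz, frame_zero h, openSegment_eq_image_unitLine h]
    exact mem_image_of_mem _ hx
  · rw [openSegment_eq_image']
    exact ⟨t, ht, rfl⟩

lemma abs_ordFn_eq_interLen
    (hnt : ∀ z : Pt, ¬ (z ∈ intrinsicInterior ℝ (segment ℝ p q) ∧
      z ∈ intrinsicInterior ℝ (segment ℝ r s))) :
    |ordFn p q r s| = interLen (dist p q) (frameX p q r) (frameX p q s) := by
  rcases eq_or_ne p q with rfl | h
  · rw [ordFn_self, abs_zero, dist_self]
    exact (le_antisymm (interLen_le le_rfl) (interLen_nonneg _ _ _)).symm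
  rw [ordFn_eq h]
  exact abs_upperShadowLen_sub_neg dist_nonneg
    fun t ht hy => frameX_notMem_Ioo_of_frameY_eq_zero h hnt ht hy

lemma segment_inter_segment_eq_image (h : p ≠ q) (hr : frameY p q r = 0) (hs : frameY p q s = 0) :
    segment ℝ p q ∩ segment ℝ r s =
      unitLine p (norm_udir h) '' (Icc 0 (dist p q) ∩ uIcc (frameX p q r) (frameX p q s)) := by
  have hr' : p + frameX p q r • udir p q = r := by
    rw [← unitLine_apply p (norm_udir h), ← frame_zero h, frame_eq_iff h]
    exact ⟨rfl, hr.symm⟩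
  have hs' : p + frameX p q s • udir p q = s := by
    rw [← unitLine_apply p (norm_udir h), ← frame_zero h, frame_eq_iff h]
    exact ⟨rfl, hs.symm⟩
  rw [image_inter (unitLine p (norm_udir h)).injective, ← segment_eq_image_unitLine h,
    image_unitLine_uIcc, hr', hs']

lemma diam_segment_inter_segment (h : p ≠ q) (hr : frameY p q r = 0) (hs : frameY p q s = 0) :
    Metric.diam (segment ℝ p q ∩ segment ℝ r s) =
      interLen (dist p q) (frameX p q r) (frameX p q s) := by
  rw [segment_inter_segment_eq_image h hr hs, (unitLine p (norm_udir h)).isometry.diam_image,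
    diam_Icc_inter_uIcc]

lemma frameY_eq_zero_of_mem_segment {z : Pt} (hz : z ∈ segment ℝ p q) :
    frameY p q z = 0 := by
  rw [segment_eq_image'] at hz
  obtain ⟨t, -, rfl⟩ := hz
  rw [frameY_add_smul_sub, frameY_self_left, frameY_self_right]
  ring

lemma ne_and_interLen_eq_of_overlapLen {d : ℝ} (hd : 0 < d)
    (hov : OverlapLen (segment ℝ p q) (segment ℝ r s) d) :
    p ≠ q ∧ interLen (dist p q) (frameX p q r) (frameX p q s) = d := by
  obtain ⟨u, v, huv, rfl⟩ := hov
  have hu : u ∈ segment ℝ p q ∩ segment ℝ r s := huv ▸ left_mem_segment ℝ u v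
  have hv : v ∈ segment ℝ p q ∩ segment ℝ r s := huv ▸ right_mem_segment ℝ u v
  have hne : u ≠ v := dist_pos.1 hd
  have h : p ≠ q := by
    rintro rfl
    simp only [segment_same, mem_inter_iff, mem_singleton_iff] at hu hv
    exact hne (hu.1.trans hv.1.symm)
  have hyu := frameY_eq_zero_of_mem_segment hu.1
  have hyv := frameY_eq_zero_of_mem_segment hv.1
  obtain ⟨t₁, -, rfl⟩ : u ∈ (fun t : ℝ => r + t • (s - r)) '' Icc 0 1 :=
    segment_eq_image' ℝ r s ▸ hu.2
  obtain ⟨t₂, -, rfl⟩ : v ∈ (fun t : ℝ => r + t • (s - r)) '' Icc 0 1 :=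
    segment_eq_image' ℝ r s ▸ hv.2
  rw [frameY_add_smul_sub] at hyu hyv
  have ht : t₁ ≠ t₂ := by rintro rfl; exact hne rfl
  have hβα : frameY p q s - frameY p q r = 0 :=
    (mul_eq_zero.1 (by linear_combination hyu - hyv : (t₁ - t₂) * _ = 0)).resolve_left
      (sub_ne_zero.2 ht)
  have hr : frameY p q r = 0 := by linear_combination hyu - t₁ * hβα
  have hs : frameY p q s = 0 := by linear_combination hβα + hr
  refine ⟨h, ?_⟩
  rw [← diam_segment_inter_segment h hr hs, huv, diam_segment]

lemma frameY_ne_zero_or_interLen_eq_zero (h : p ≠ q)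
    (hno : ¬ ∃ d : ℝ, 0 < d ∧ OverlapLen (segment ℝ p q) (segment ℝ r s) d) :
    (frameY p q r, frameY p q s) ≠ 0 ∨ interLen (dist p q) (frameX p q r) (frameX p q s) = 0 := by
  rw [or_iff_not_imp_left, not_not, Prod.mk_eq_zero]
  rintro ⟨hr, hs⟩
  by_contra hpos
  replace hpos := (interLen_nonneg _ _ _).lt_of_ne' hpos
  refine hno ⟨_, hpos, ?_⟩
  obtain ⟨c, d, hcd, hS⟩ : ∃ c d, c ≤ d ∧
      Icc 0 (dist p q) ∩ uIcc (frameX p q r) (frameX p q s) = Icc c d := by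
    rw [uIcc, Icc_inter_Icc]
    refine ⟨_, _, ?_, rfl⟩
    have := (lt_max_iff.1 hpos).resolve_left (lt_irrefl 0)
    linarith
  set φ := unitLine p (norm_udir h)
  have hseg : segment ℝ p q ∩ segment ℝ r s = segment ℝ (φ c) (φ d) := by
    rw [segment_inter_segment_eq_image h hr hs, hS, ← uIcc_of_le hcd, image_unitLine_uIcc,
      unitLine_apply, unitLine_apply]
  refine ⟨φ c, φ d, hseg, ?_⟩
  rw [← diam_segment, ← hseg, diam_segment_inter_segment h hr hs]

end geometry

/-- Let `e₁ⁿ` (from `p₁ n` to `q₁ n`) and `e₂ⁿ` (from `p₂ n` to `q₂ n`) be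
sequences of oriented segments converging endpoint-wise to `e₁` (from `p` to `q`) and `e₂`
(from `r` to `s`), such that for every `n` the segments `e₁ⁿ` and `e₂ⁿ` do not intersect at
a point lying in the relative interior of both.  If `e₁` and `e₂` do not overlap over a
segment of positive length, then `Ord(e₁ⁿ, e₂ⁿ) → Ord(e₁, e₂)`; and if `e₁` and `e₂`
overlap over a segment of length `d > 0`, then every accumulation point of the sequence
`Ord(e₁ⁿ, e₂ⁿ)` lies in `{d, −d}`. -/
theorem ordFn_limit (p₁ q₁ p₂ q₂ : ℕ → Pt) (p q r s : Pt)
    (h₁ : Tendsto p₁ atTop (𝓝 p)) (h₂ : Tendsto q₁ atTop (𝓝 q))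
    (h₃ : Tendsto p₂ atTop (𝓝 r)) (h₄ : Tendsto q₂ atTop (𝓝 s))
    (hnt : ∀ n : ℕ, ∀ z : Pt, ¬ (z ∈ intrinsicInterior ℝ (segment ℝ (p₁ n) (q₁ n)) ∧
      z ∈ intrinsicInterior ℝ (segment ℝ (p₂ n) (q₂ n)))) :
    ((¬ ∃ d : ℝ, 0 < d ∧ OverlapLen (segment ℝ p q) (segment ℝ r s) d) →
      Tendsto (fun n => ordFn (p₁ n) (q₁ n) (p₂ n) (q₂ n)) atTop (𝓝 (ordFn p q r s))) ∧
    (∀ d : ℝ, 0 < d → OverlapLen (segment ℝ p q) (segment ℝ r s) d →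
      ∀ x : ℝ, MapClusterPt x atTop (fun n => ordFn (p₁ n) (q₁ n) (p₂ n) (q₂ n)) →
        x = d ∨ x = -d) := by
  have habs n := abs_ordFn_eq_interLen (hnt n)
  constructor
  · intro hno
    rcases eq_or_ne p q with rfl | h
    · rw [ordFn_self]
      refine squeeze_zero_norm (fun n => ?_) (by simpa using h₁.dist h₂)
      exact (habs n).le.trans (interLen_le dist_nonneg)
    · exact tendsto_ordFn h h₁ h₂ h₃ h₄ (frameY_ne_zero_or_interLen_eq_zero h hno)
  · intro d hd hov x hx
    obtain ⟨h, hlen⟩ := ne_and_interLen_eq_of_overlapLen hd hov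
    have hlim : Tendsto (fun n => |ordFn (p₁ n) (q₁ n) (p₂ n) (q₂ n)|) atTop (𝓝 d) := by
      simp_rw [habs, ← hlen]
      exact tendsto_interLen (h₁.dist h₂) (tendsto_frameX h h₁ h₂ h₃) (tendsto_frameX h h₁ h₂ h₄)
    have hx' : |x| = d :=
      eq_of_nhds_neBot ((hx.tendsto_comp continuous_abs.continuousAt).neBot.mono
        (inf_le_inf_left _ hlim))
    exact abs_eq hd.le |>.1 hx'
end
end

section
/- Let L be a linkage whose graph G is connected, let ε ≥ 0, and fix a vertex v₀ ∈ V(G). Then the set {(C,A) ∈ closure(Annot_L(NConf_ε(L))) : C(v₀) = 0} is a compact subset of (ℝ²)^{V(G)} × ℝ^{E(G)×E(G)}. -/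
open MeasureTheory Filter Topology Set

noncomputable section
open scoped Classical

/-- A linkage: a finite graph given by an edge-index type `E` with endpoint maps
`fst, snd : E → V` (this also fixes an orientation of each edge), together with a
nonnegative length for each edge (bar). -/
structure Linkage (V E : Type) where
  fst : E → V
  snd : E → V
  len : E → ℝ
  len_nonneg : ∀ e, 0 ≤ len e

variable {V E : Type}

/-- The set `Conf₀(L)` of configurations of a linkage: maps `C : V → ℝ²` realizing
every edge length exactly. -/
def ConfSet (L : Linkage V E) : Set (V → Pt) :=
  {C | ∀ e : E, dist (C (L.fst e)) (C (L.snd e)) = L.len e}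

/-- Configurations of linkages `ε`-related to `L`: each bar length is realized within
`ε` of its length in `L`. -/
def ConfRel (L : Linkage V E) (ε : ℝ) : Set (V → Pt) :=
  {C | ∀ e : E, |dist (C (L.fst e)) (C (L.snd e)) - L.len e| ≤ ε}

/-- The closed segment (bar) assigned to edge `e` by the configuration `C`. -/
def Seg (L : Linkage V E) (C : V → Pt) (e : E) : Set Pt :=
  segment ℝ (C (L.fst e)) (C (L.snd e))

/-- Two vertices are joined by a path of zero-length bars (bars whose endpoints coincide
under the configuration `C`). -/
def ZeroJoined (L : Linkage V E) (C : V → Pt) : V → V → Prop :=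
  Relation.ReflTransGen fun u v =>
    (∃ e : E, (L.fst e = u ∧ L.snd e = v) ∨ (L.fst e = v ∧ L.snd e = u)) ∧ C u = C v

/-- A configuration is nontouching if no two bars intersect except at shared endpoints,
and two vertices are mapped to the same point if and only if they are joined by a path of
zero-length bars. -/
def Nontouching (L : Linkage V E) (C : V → Pt) : Prop :=
  (∀ u v : V, C u = C v ↔ ZeroJoined L C u v) ∧
  (∀ e f : E, e ≠ f → ∀ z ∈ Seg L C e ∩ Seg L C f,
    (∃ u : V, (L.fst e = u ∨ L.snd e = u) ∧ C u = z) ∧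
    (∃ v : V, (L.fst f = v ∨ L.snd f = v) ∧ C v = z))

/-- `NConf_ε(L)`: the nontouching configurations of linkages `ε`-related to `L`. -/
def NConf (L : Linkage V E) (ε : ℝ) : Set (V → Pt) :=
  {C | C ∈ ConfRel L ε ∧ Nontouching L C}

/-- The annotation function `Annot_L`, sending a map `C : V → ℝ²` to the pair `(C, A)`
where `A i j = Ord(C(eᵢ), C(eⱼ))`. -/
def Annot (L : Linkage V E) (C : V → Pt) : (V → Pt) × (E → E → ℝ) :=
  (C, fun i j => ordFn (C (L.fst i)) (C (L.snd i)) (C (L.fst j)) (C (L.snd j)))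

/-- The space `IGConf₀(L)` of noncrossing configurations of `L`:
`(Conf₀(L) × ℝ^{E×E}) ∩ closure (Annot_L(NConf₁(L)))`. -/
def IGConf (L : Linkage V E) : Set ((V → Pt) × (E → E → ℝ)) :=
  (ConfSet L ×ˢ (Set.univ : Set (E → E → ℝ))) ∩ closure (Annot L '' NConf L 1)

/-- The graph of the linkage `L` is connected: any two vertices are joined by a walk. -/
def GraphConnected (L : Linkage V E) : Prop :=
  ∀ u v : V, Relation.ReflTransGen
    (fun a b => ∃ e : E, (L.fst e = a ∧ L.snd e = b) ∨ (L.fst e = b ∧ L.snd e = a)) u v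

/-! The order entries of an annotation are bounded by the length of the first bar, and in an
`ε`-related configuration of a connected linkage every vertex lies within a bounded distance of
`v₀`. Translating configurations so that `v₀` sits at the origin is continuous, fixes the pinned
set and maps `Annot_L(NConf_ε(L))` into a bounded set, so the pinned part of the closure is a
closed subset of the closure of a bounded set in a proper space. -/

lemma toReal_volume_sep_Icc_le {d : ℝ} (hd : 0 ≤ d) (P : ℝ → Prop) :
    (volume {x | x ∈ Icc (0 : ℝ) d ∧ P x}).toReal ≤ d :=
  calc volume.real {x | x ∈ Icc (0 : ℝ) d ∧ P x} ≤ volume.real (Icc (0 : ℝ) d) :=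
        measureReal_mono (fun _ hx => hx.1) measure_Icc_lt_top.ne
    _ = d := by rw [Real.volume_real_Icc_of_le hd, sub_zero]

lemma dplus_le_dist (p q r s : Pt) : dplus p q r s ≤ dist p q := by
  unfold dplus
  split_ifs with h
  · simp [h]
  · exact toReal_volume_sep_Icc_le dist_nonneg _

lemma dminus_le_dist (p q r s : Pt) : dminus p q r s ≤ dist p q := by
  unfold dminus
  split_ifs with h
  · simp [h]
  · exact toReal_volume_sep_Icc_le dist_nonneg _

lemma dplus_nonneg (p q r s : Pt) : 0 ≤ dplus p q r s := by
  unfold dplus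
  split_ifs
  exacts [le_rfl, ENNReal.toReal_nonneg]

lemma dminus_nonneg (p q r s : Pt) : 0 ≤ dminus p q r s := by
  unfold dminus
  split_ifs
  exacts [le_rfl, ENNReal.toReal_nonneg]

lemma abs_ordFn_le_dist (p q r s : Pt) : |ordFn p q r s| ≤ dist p q :=
  abs_sub_le_of_nonneg_of_le (dplus_nonneg p q r s) (dplus_le_dist p q r s)
    (dminus_nonneg p q r s) (dminus_le_dist p q r s)

lemma exists_forall_dist_le_of_reflTransGen {α β : Type*} [PseudoMetricSpace β]
    {r : α → α → Prop} {S : Set (α → β)}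
    (hr : ∀ a b, r a b → ∃ B, ∀ C ∈ S, dist (C a) (C b) ≤ B) {u v : α}
    (huv : Relation.ReflTransGen r u v) : ∃ B, ∀ C ∈ S, dist (C u) (C v) ≤ B := by
  induction huv with
  | refl => exact ⟨0, fun C _ => (dist_self _).le⟩
  | tail _ hbc ih =>
    obtain ⟨B, hB⟩ := ih
    obtain ⟨B', hB'⟩ := hr _ _ hbc
    exact ⟨B + B', fun C hC => (dist_triangle _ _ _).trans (add_le_add (hB C hC) (hB' C hC))⟩

lemma isCompact_closure_inter_of_isBounded_image {X : Type*} [PseudoMetricSpace X] [ProperSpace X]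
    {f : X → X} (hf : Continuous f) {T P : Set X} (hT : Bornology.IsBounded (f '' T))
    (hP : IsClosed P) (hfP : ∀ x ∈ P, f x = x) : IsCompact (closure T ∩ P) := by
  refine Metric.isCompact_of_isClosed_isBounded (isClosed_closure.inter hP)
    (hT.closure.subset ?_)
  rintro x ⟨hxT, hxP⟩
  exact hfP x hxP ▸ image_closure_subset_closure_image hf ⟨x, hxT, rfl⟩

namespace Linkage

variable (L : Linkage V E)

lemma dist_le_len_add_of_mem_confRel {ε : ℝ} {C : V → Pt} (hC : C ∈ ConfRel L ε) (e : E) :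
    dist (C (L.fst e)) (C (L.snd e)) ≤ L.len e + ε := by
  linarith [(abs_sub_le_iff.1 (hC e)).1]

lemma exists_forall_dist_le_of_graphConnected (hconn : GraphConnected L) (ε : ℝ) (u v : V) :
    ∃ B, ∀ C ∈ ConfRel L ε, dist (C u) (C v) ≤ B := by
  refine exists_forall_dist_le_of_reflTransGen ?_ (hconn u v)
  rintro a b ⟨e, ⟨rfl, rfl⟩ | ⟨rfl, rfl⟩⟩
  · exact ⟨L.len e + ε, fun C hC => L.dist_le_len_add_of_mem_confRel hC e⟩
  · exact ⟨L.len e + ε, fun C hC => by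
      rw [dist_comm]
      exact L.dist_le_len_add_of_mem_confRel hC e⟩

def pinAt (v₀ : V) (x : (V → Pt) × (E → E → ℝ)) : (V → Pt) × (E → E → ℝ) :=
  (fun v => x.1 v - x.1 v₀, x.2)

lemma continuous_pinAt (v₀ : V) : Continuous (pinAt (E := E) v₀) := by
  unfold pinAt
  fun_prop

lemma isBounded_pinAt_image_annot_confRel [Fintype V] [Fintype E] (hconn : GraphConnected L)
    (ε : ℝ) (v₀ : V) : Bornology.IsBounded (pinAt v₀ '' (Annot L '' ConfRel L ε)) := by
  choose B hB using fun v => L.exists_forall_dist_le_of_graphConnected hconn ε v v₀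
  refine ((Bornology.IsBounded.pi fun v => Metric.isBounded_closedBall (x := 0) (r := B v)).prod
    (Bornology.IsBounded.pi fun i => Bornology.IsBounded.pi fun _ =>
      Metric.isBounded_closedBall (x := 0) (r := L.len i + ε))).subset ?_
  rintro _ ⟨_, ⟨C, hC, rfl⟩, rfl⟩
  refine ⟨fun v _ => ?_, fun i _ j _ => ?_⟩
  · simpa [pinAt, Annot, dist_eq_norm] using hB v C hC
  · simpa [pinAt, Annot] using
      (abs_ordFn_le_dist _ _ _ _).trans (L.dist_le_len_add_of_mem_confRel hC i)

end Linkage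

theorem closure_annot_pinned_isCompact_general [Fintype V] [Fintype E] (L : Linkage V E)
    (hconn : GraphConnected L) (ε : ℝ) (v₀ : V) :
    IsCompact {x : (V → Pt) × (E → E → ℝ) |
      x ∈ closure (Annot L '' NConf L ε) ∧ x.1 v₀ = 0} := by
  refine isCompact_closure_inter_of_isBounded_image (Linkage.continuous_pinAt v₀)
    ((L.isBounded_pinAt_image_annot_confRel hconn ε v₀).subset
      (image_mono (image_mono fun _ hC => hC.1)))
    (isClosed_eq ((continuous_apply v₀).comp continuous_fst) continuous_const) ?_
  rintro x (hx : x.1 v₀ = 0)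
  simp [Linkage.pinAt, hx]

/-- Let `L` be a linkage whose graph is connected, let `ε ≥ 0`, and fix a
vertex `v₀`.  Then `{(C,A) ∈ closure(Annot_L(NConf_ε(L))) : C(v₀) = 0}` is a compact
subset of `(ℝ²)^V × ℝ^{E×E}`. -/
theorem closure_annot_pinned_isCompact [Fintype V] [Fintype E] (L : Linkage V E)
    (hconn : GraphConnected L) (ε : ℝ) (hε : 0 ≤ ε) (v₀ : V) :
    IsCompact {x : (V → Pt) × (E → E → ℝ) |
      x ∈ closure (Annot L '' NConf L ε) ∧ x.1 v₀ = 0} :=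
  closure_annot_pinned_isCompact_general L hconn ε v₀
end
end
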